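/- Let Δ₃ = {(x,y,z) ∈ ℝ³ : x ≥ 0, y ≥ 0, z ≥ 0, x + y + z ≤ 1} be the standard 3-simplex with barycentric coordinates λ₁ = x, λ₂ = y, λ₃ = z, λ₄ = 1 − x − y − z, let γ > 0, let Ω^{(γ)} = (Γ(4γ)/Γ(γ)⁴)(λ₁λ₂λ₃λ₄)^{γ−1}, and set ψ₁₂ = λ₁λ₂ + h_γ − k_γ(λ₁ + λ₂) with h_γ = γ²/(2(2γ+1)(4γ+1)) and k_γ = γ/(2(2γ+1)). Then the following moment identities hold: ∫_{Δ₃} ψ₁₂ · λ₁λ₂ · Ω^{(γ)} dx = γ(5γ²+5γ+1)/(8(1+2γ)²(1+4γ)²(3+4γ)); ∫_{Δ₃} ψ₁₂ · λ₃λ₄ · Ω^{(γ)} dx = γ³/(8(1+2γ)²(1+4γ)²(3+4γ)); and ∫_{Δ₃} ψ₁₂ · λ₁λ₃ · Ω^{(γ)} dx = −γ²/(16(1+2γ)(1+4γ)²(3+4γ)). -/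

import Mathlib

/-
Every integrand is a combination of Dirichlet monomials `λ^k Ω^{(γ)}`, whose integrals are
`Γ(4γ)/Γ(γ)⁴ · ∏ Γ(γ + kᵢ) / Γ(4γ + |k|) = ∏ (γ)_{kᵢ} / (4γ)_{|k|}` (rising factorials).
That Dirichlet integral is computed on the corner simplex `{x ≥ 0, ∑ xᵢ ≤ T}` of any dimension by
induction: integrating out the first coordinate `t` leaves a corner simplex of size `T - t`, and
the remaining one-dimensional integral `∫₀ᵀ t^(p-1) (T-t)^(q-1) dt = T^(p+q-1) B(p, q)` is a
rescaled Beta integral. Expanding `ψ₁₂ λᵢλⱼ` into four monomials then turns each moment identity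
into an identity of rational functions of `γ`.
-/

open MeasureTheory

noncomputable section

/-- The standard 3-simplex in `ℝ³`. -/
def simplex3 : Set (Fin 3 → ℝ) :=
  {x | 0 ≤ x 0 ∧ 0 ≤ x 1 ∧ 0 ≤ x 2 ∧ x 0 + x 1 + x 2 ≤ 1}

/-- Barycentric coordinates on the standard 3-simplex. -/
def lam : Fin 4 → (Fin 3 → ℝ) → ℝ :=
  ![fun x => x 0, fun x => x 1, fun x => x 2, fun x => 1 - x 0 - x 1 - x 2]

/-- The symmetric Dirichlet density of parameter `γ` on the standard 3-simplex. -/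
def dirichlet3 (γ : ℝ) : (Fin 3 → ℝ) → ℝ := fun x =>
  Real.Gamma (4 * γ) / (Real.Gamma γ) ^ 4 * (lam 0 x * lam 1 x * lam 2 x * lam 3 x) ^ (γ - 1)

/-- The volumetric quadratic polynomial `ψ₁₂ = λ₁λ₂ + h_γ − k_γ(λ₁+λ₂)`. -/
def psi12 (γ : ℝ) : (Fin 3 → ℝ) → ℝ := fun x =>
  lam 0 x * lam 1 x + γ ^ 2 / (2 * (2 * γ + 1) * (4 * γ + 1)) -
    γ / (2 * (2 * γ + 1)) * (lam 0 x + lam 1 x)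

open Set Real ProbabilityTheory
open scoped ENNReal

theorem lintegral_Ioo_rpow_mul_one_sub_rpow {p q : ℝ} (hp : 0 < p) (hq : 0 < q) :
    ∫⁻ x in Ioo 0 1, ENNReal.ofReal (x ^ (p - 1) * (1 - x) ^ (q - 1)) =
      ENNReal.ofReal (beta p q) := by
  have hB := beta_pos hp hq
  have h := lintegral_betaPDF_eq_one hp hq
  simp_rw [lintegral_betaPDF, mul_assoc, ENNReal.ofReal_mul (one_div_pos.2 hB).le] at h
  rw [lintegral_const_mul' _ _ ENNReal.ofReal_ne_top] at h
  rw [← ENNReal.mul_right_inj (ENNReal.ofReal_pos.2 (one_div_pos.2 hB)).ne' ENNReal.ofReal_ne_top,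
    h, ← ENNReal.ofReal_mul (one_div_pos.2 hB).le, one_div_mul_cancel hB.ne', ENNReal.ofReal_one]

theorem lintegral_Ioo_rpow_mul_sub_rpow {p q T : ℝ} (hp : 0 < p) (hq : 0 < q) (hT : 0 < T) :
    ∫⁻ t in Ioo 0 T, ENNReal.ofReal (t ^ (p - 1) * (T - t) ^ (q - 1)) =
      ENNReal.ofReal (T ^ (p + q - 1) * beta p q) := by
  have himage : (T * ·) '' Ioo 0 1 = Ioo 0 T := by
    rw [image_mul_left_Ioo hT, mul_zero, mul_one]
  have hscale : ∀ u ∈ Ioo (0 : ℝ) 1,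
      ENNReal.ofReal |T| * ENNReal.ofReal ((T * u) ^ (p - 1) * (T - T * u) ^ (q - 1)) =
        ENNReal.ofReal (T ^ (p + q - 1)) * ENNReal.ofReal (u ^ (p - 1) * (1 - u) ^ (q - 1)) := by
    rintro u ⟨hu0, hu1⟩
    rw [← ENNReal.ofReal_mul (abs_nonneg T), ← ENNReal.ofReal_mul (by positivity)]
    congr 1
    rw [abs_of_pos hT, show T - T * u = T * (1 - u) by ring,
      mul_rpow hT.le hu0.le, mul_rpow hT.le (by linarith),
      show p + q - 1 = 1 + (p - 1) + (q - 1) by ring, rpow_add hT, rpow_add hT, rpow_one]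
    ring
  have hderiv : ∀ u ∈ Ioo (0 : ℝ) 1, HasDerivWithinAt (T * ·) T (Ioo 0 1) u := fun u _ => by
    simpa using ((hasDerivAt_id u).const_mul T).hasDerivWithinAt
  rw [← himage, lintegral_image_eq_lintegral_abs_deriv_mul measurableSet_Ioo hderiv
      (mul_right_injective₀ hT.ne').injOn,
    setLIntegral_congr_fun measurableSet_Ioo hscale,
    lintegral_const_mul' _ _ ENNReal.ofReal_ne_top,
    lintegral_Ioo_rpow_mul_one_sub_rpow hp hq, ← ENNReal.ofReal_mul (by positivity)]

section DirichletIntegral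

variable {n : ℕ}

def cornerSimplex (n : ℕ) (T : ℝ) : Set (Fin n → ℝ) :=
  {x | (∀ i, 0 ≤ x i) ∧ ∑ i, x i ≤ T}

def dirichletMonomial (α : Fin n → ℝ) (β T : ℝ) (x : Fin n → ℝ) : ℝ :=
  (∏ i, x i ^ (α i - 1)) * (T - ∑ i, x i) ^ (β - 1)

def dirichletConst (α : Fin n → ℝ) (β : ℝ) : ℝ :=
  (∏ i, Gamma (α i)) * Gamma β / Gamma (∑ i, α i + β)

theorem measurableSet_cornerSimplex (n : ℕ) (T : ℝ) : MeasurableSet (cornerSimplex n T) := by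
  simp only [cornerSimplex, ofPred_and, ofPred_forall]
  exact (MeasurableSet.iInter fun i => measurableSet_le measurable_const (measurable_pi_apply i)).inter
    (measurableSet_le (by fun_prop) measurable_const)

theorem cornerSimplex_eq_empty {T : ℝ} (hT : T < 0) : cornerSimplex n T = ∅ :=
  eq_empty_of_forall_notMem fun _ ⟨hx, hsum⟩ =>
    (hsum.trans_lt hT).not_ge (Finset.sum_nonneg fun i _ => hx i)

@[fun_prop]
theorem measurable_dirichletMonomial (α : Fin n → ℝ) (β T : ℝ) :
    Measurable (dirichletMonomial α β T) := by
  unfold dirichletMonomial; fun_prop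

theorem dirichletMonomial_nonneg {α : Fin n → ℝ} {β T : ℝ} {x : Fin n → ℝ}
    (hx : x ∈ cornerSimplex n T) : 0 ≤ dirichletMonomial α β T x :=
  mul_nonneg (Finset.prod_nonneg fun i _ => rpow_nonneg (hx.1 i) _)
    (rpow_nonneg (sub_nonneg.2 hx.2) _)

theorem sum_add_pos_of_forall_pos {α : Fin n → ℝ} {β : ℝ} (hα : ∀ i, 0 < α i) (hβ : 0 < β) :
    0 < ∑ i, α i + β :=
  add_pos_of_nonneg_of_pos (Finset.sum_nonneg fun i _ => (hα i).le) hβ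

theorem dirichletConst_pos {α : Fin n → ℝ} {β : ℝ} (hα : ∀ i, 0 < α i) (hβ : 0 < β) :
    0 < dirichletConst α β :=
  div_pos (mul_pos (Finset.prod_pos fun i _ => Gamma_pos_of_pos (hα i)) (Gamma_pos_of_pos hβ))
    (Gamma_pos_of_pos (sum_add_pos_of_forall_pos hα hβ))

theorem cons_mem_cornerSimplex_iff {t T : ℝ} {y : Fin n → ℝ} :
    Fin.cons t y ∈ cornerSimplex (n + 1) T ↔ 0 ≤ t ∧ y ∈ cornerSimplex n (T - t) := by
  simp only [cornerSimplex, mem_ofPred_eq, Fin.forall_fin_succ, Fin.sum_univ_succ,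
    Fin.cons_zero, Fin.cons_succ, le_sub_iff_add_le']
  tauto

theorem dirichletMonomial_cons (α : Fin (n + 1) → ℝ) (β T t : ℝ) (y : Fin n → ℝ) :
    dirichletMonomial α β T (Fin.cons t y) =
      t ^ (α 0 - 1) * dirichletMonomial (Fin.tail α) β (T - t) y := by
  simp only [dirichletMonomial, Fin.prod_univ_succ, Fin.sum_univ_succ, Fin.cons_zero,
    Fin.cons_succ, Fin.tail, sub_add_eq_sub_sub]
  ring

theorem dirichletConst_succ {α : Fin (n + 1) → ℝ} {β : ℝ} (hα : ∀ i, 0 < α i) (hβ : 0 < β) :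
    dirichletConst α β =
      beta (α 0) (∑ i, Fin.tail α i + β) * dirichletConst (Fin.tail α) β := by
  have : Gamma (∑ i, Fin.tail α i + β) ≠ 0 :=
    (Gamma_pos_of_pos (sum_add_pos_of_forall_pos (fun i => hα _) hβ)).ne'
  simp only [dirichletConst, beta, Fin.prod_univ_succ, Fin.sum_univ_succ, Fin.tail, add_assoc] at this ⊢
  field_simp

theorem lintegral_fin_succ_eq_lintegral_cons {f : (Fin (n + 1) → ℝ) → ℝ≥0∞} (hf : Measurable f) :
    ∫⁻ x, f x = ∫⁻ t, ∫⁻ y, f (Fin.cons t y) := by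
  set e := MeasurableEquiv.piFinSuccAbove (fun _ : Fin (n + 1) => ℝ) 0
  rw [← (volume_preserving_piFinSuccAbove (fun _ : Fin (n + 1) => ℝ) 0).symm.lintegral_comp hf,
    Measure.volume_eq_prod, lintegral_prod (fun z => f (e.symm z))
      (hf.comp e.symm.measurable).aemeasurable]
  simp only [e, MeasurableEquiv.piFinSuccAbove_symm_apply, Fin.insertNthEquiv_zero]
  rfl

theorem indicator_cornerSimplex_cons (α : Fin (n + 1) → ℝ) (β T t : ℝ) (y : Fin n → ℝ) :
    (cornerSimplex (n + 1) T).indicator (fun x => ENNReal.ofReal (dirichletMonomial α β T x))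
        (Fin.cons t y) =
      (Ici 0).indicator (fun t => ENNReal.ofReal (t ^ (α 0 - 1))) t *
        (cornerSimplex n (T - t)).indicator
          (fun y => ENNReal.ofReal (dirichletMonomial (Fin.tail α) β (T - t) y)) y := by
  by_cases ht : 0 ≤ t
  · by_cases hy : y ∈ cornerSimplex n (T - t)
    · rw [indicator_of_mem (cons_mem_cornerSimplex_iff.2 ⟨ht, hy⟩), indicator_of_mem hy,
        indicator_of_mem (show t ∈ Ici 0 from ht), dirichletMonomial_cons,
        ENNReal.ofReal_mul (rpow_nonneg ht _)]
    · rw [indicator_of_notMem (fun h => hy (cons_mem_cornerSimplex_iff.1 h).2),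
        indicator_of_notMem hy, mul_zero]
  · rw [indicator_of_notMem (fun h => ht (cons_mem_cornerSimplex_iff.1 h).1),
      indicator_of_notMem (show t ∉ Ici 0 from ht), zero_mul]

theorem lintegral_cornerSimplex_succ (α : Fin (n + 1) → ℝ) (β T : ℝ) :
    ∫⁻ x in cornerSimplex (n + 1) T, ENNReal.ofReal (dirichletMonomial α β T x) =
      ∫⁻ t in Icc 0 T, ENNReal.ofReal (t ^ (α 0 - 1)) *
        ∫⁻ y in cornerSimplex n (T - t),
          ENNReal.ofReal (dirichletMonomial (Fin.tail α) β (T - t) y) := by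
  have hmeas {m : ℕ} (α' : Fin m → ℝ) (S : ℝ) :=
    (measurable_dirichletMonomial α' β S).ennreal_ofReal.indicator (measurableSet_cornerSimplex m S)
  rw [← lintegral_indicator (measurableSet_cornerSimplex _ _),
    lintegral_fin_succ_eq_lintegral_cons (hmeas α T)]
  simp only [indicator_cornerSimplex_cons, lintegral_const_mul _ (hmeas _ _),
    lintegral_indicator (measurableSet_cornerSimplex _ _)]
  rw [← setLIntegral_eq_of_support_subset]
  · refine setLIntegral_congr_fun measurableSet_Icc fun t ht => ?_
    rw [indicator_of_mem (show t ∈ Ici 0 from ht.1)]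
  · intro t ht
    by_contra hnot
    rcases not_and_or.1 hnot with h0 | hT
    · exact ht (by simp [indicator_of_notMem (show t ∉ Ici 0 from h0)])
    · exact ht (by simp [cornerSimplex_eq_empty (sub_neg.2 (not_le.1 hT))])

-- Lower Lebesgue integrals, so that Tonelli applies before integrability is known.
theorem lintegral_cornerSimplex_dirichletMonomial (α : Fin n → ℝ) {β T : ℝ} (hα : ∀ i, 0 < α i)
    (hβ : 0 < β) (hT : 0 < T) :
    ∫⁻ x in cornerSimplex n T, ENNReal.ofReal (dirichletMonomial α β T x) =
      ENNReal.ofReal (T ^ (∑ i, α i + β - 1) * dirichletConst α β) := by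
  induction n generalizing T with
  | zero =>
    have huniv : cornerSimplex 0 T = univ := eq_univ_of_forall fun x => by
      simp [cornerSimplex, hT.le]
    rw [huniv, Measure.restrict_univ, Measure.volume_pi_eq_dirac]
    simp [dirichletMonomial, dirichletConst, (Gamma_pos_of_pos hβ).ne']
  | succ n ih =>
    have hs := sum_add_pos_of_forall_pos (α := Fin.tail α) (fun i => hα _) hβ
    have hD := (dirichletConst_pos (α := Fin.tail α) (fun i => hα _) hβ).le
    have hslice : ∀ t ∈ Ioo 0 T, ENNReal.ofReal (t ^ (α 0 - 1)) *
        ∫⁻ y in cornerSimplex n (T - t),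
          ENNReal.ofReal (dirichletMonomial (Fin.tail α) β (T - t) y) =
        ENNReal.ofReal (dirichletConst (Fin.tail α) β) *
          ENNReal.ofReal (t ^ (α 0 - 1) * (T - t) ^ (∑ i, Fin.tail α i + β - 1)) := by
      rintro t ⟨ht0, htT⟩
      rw [ih (Fin.tail α) (fun i => hα _) (sub_pos.2 htT),
        ← ENNReal.ofReal_mul (rpow_nonneg ht0.le _), ← ENNReal.ofReal_mul hD]
      ring_nf
    rw [lintegral_cornerSimplex_succ, ← Measure.restrict_congr_set Ioo_ae_eq_Icc,
      setLIntegral_congr_fun measurableSet_Ioo hslice,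
      lintegral_const_mul' _ _ ENNReal.ofReal_ne_top,
      lintegral_Ioo_rpow_mul_sub_rpow (hα 0) hs hT, ← ENNReal.ofReal_mul hD,
      dirichletConst_succ hα hβ, Fin.sum_univ_succ]
    congr 1
    simp only [Fin.tail, add_assoc]
    ring

theorem dirichletMonomial_nonneg_ae {α : Fin n → ℝ} {β : ℝ} (T : ℝ) :
    0 ≤ᵐ[volume.restrict (cornerSimplex n T)] dirichletMonomial α β T :=
  ae_restrict_of_forall_mem (measurableSet_cornerSimplex n T) fun _ => dirichletMonomial_nonneg

theorem integrableOn_dirichletMonomial {α : Fin n → ℝ} {β T : ℝ} (hα : ∀ i, 0 < α i) (hβ : 0 < β) (hT : 0 < T) :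
    IntegrableOn (dirichletMonomial α β T) (cornerSimplex n T) :=
  ⟨(measurable_dirichletMonomial α β T).aestronglyMeasurable,
    (hasFiniteIntegral_iff_ofReal (dirichletMonomial_nonneg_ae T)).2 <| by
      rw [lintegral_cornerSimplex_dirichletMonomial α hα hβ hT]
      exact ENNReal.ofReal_lt_top⟩

theorem integral_dirichletMonomial {α : Fin n → ℝ} {β T : ℝ} (hα : ∀ i, 0 < α i) (hβ : 0 < β) (hT : 0 < T) :
    ∫ x in cornerSimplex n T, dirichletMonomial α β T x =
      T ^ (∑ i, α i + β - 1) * dirichletConst α β := by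
  rw [integral_eq_lintegral_of_nonneg_ae (dirichletMonomial_nonneg_ae T)
      (measurable_dirichletMonomial α β T).aestronglyMeasurable,
    lintegral_cornerSimplex_dirichletMonomial α hα hβ hT,
    ENNReal.toReal_ofReal (mul_nonneg (rpow_nonneg hT.le _) (dirichletConst_pos hα hβ).le)]

end DirichletIntegral

theorem Real.Gamma_add_nat {s : ℝ} (hs : 0 < s) (k : ℕ) :
    Gamma (s + k) = (ascPochhammer ℝ k).eval s * Gamma s := by
  induction k with
  | zero => simp
  | succ k ih =>
    rw [Nat.cast_succ, ← add_assoc, Gamma_add_one (by positivity), ih, ascPochhammer_succ_eval]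
    ring

theorem Real.rpow_add_natCast_sub_one {x γ : ℝ} (hx : 0 ≤ x) (hγ : 0 < γ) (k : ℕ) :
    x ^ (γ + k - 1) = x ^ k * x ^ (γ - 1) := by
  cases k with
  | zero => simp
  | succ k =>
    rw [add_sub_right_comm, rpow_add_natCast' hx (by push_cast; linarith), mul_comm]

theorem simplex3_eq_cornerSimplex : simplex3 = cornerSimplex 3 1 := by
  ext x
  simp [simplex3, cornerSimplex, Fin.forall_fin_succ, Fin.sum_univ_three, and_assoc]

def lamMonomial (k : Fin 4 → ℕ) (x : Fin 3 → ℝ) : ℝ :=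
  ∏ i, lam i x ^ k i

theorem lamMonomial_mul_dirichlet3 {γ : ℝ} (hγ : 0 < γ) (k : Fin 4 → ℕ) {x : Fin 3 → ℝ}
    (hx : x ∈ simplex3) :
    lamMonomial k x * dirichlet3 γ x = Gamma (4 * γ) / Gamma γ ^ 4 *
      dirichletMonomial (fun i => γ + k i.castSucc) (γ + k 3) 1 x := by
  obtain ⟨h0, h1, h2, h3⟩ := hx
  have h4 : 0 ≤ 1 - x 0 - x 1 - x 2 := by linarith
  simp only [lamMonomial, dirichletMonomial, Fin.prod_univ_four, Fin.prod_univ_three,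
    Fin.sum_univ_three]
  change x 0 ^ k 0 * x 1 ^ k 1 * x 2 ^ k 2 * (1 - x 0 - x 1 - x 2) ^ k 3 *
      (Gamma (4 * γ) / Gamma γ ^ 4 * (x 0 * x 1 * x 2 * (1 - x 0 - x 1 - x 2)) ^ (γ - 1)) =
    Gamma (4 * γ) / Gamma γ ^ 4 * (x 0 ^ (γ + k 0 - 1) * x 1 ^ (γ + k 1 - 1) *
      x 2 ^ (γ + k 2 - 1) * (1 - (x 0 + x 1 + x 2)) ^ (γ + k 3 - 1))
  rw [mul_rpow (by positivity) h4, mul_rpow (by positivity) h2, mul_rpow h0 h1,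
    ← sub_sub, ← sub_sub, rpow_add_natCast_sub_one h0 hγ, rpow_add_natCast_sub_one h1 hγ,
    rpow_add_natCast_sub_one h2 hγ, rpow_add_natCast_sub_one h4 hγ]
  ring

theorem dirichletConst_castSucc_last {γ : ℝ} (k : Fin 4 → ℕ) :
    dirichletConst (fun i => γ + k i.castSucc) (γ + k 3) =
      (∏ i, Gamma (γ + k i)) / Gamma (4 * γ + ↑(∑ i, k i)) := by
  rw [dirichletConst, Fin.prod_univ_castSucc (fun i => Gamma (γ + k i)), Fin.sum_univ_castSucc]
  congr 2
  simp only [Fin.sum_univ_two, Fin.isValue, Fin.castSucc_zero, Fin.castSucc_one, Fin.reduceLast,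
    Fin.reduceCastSucc, Fin.sum_univ_four, Nat.cast_add]
  ring

theorem measurableSet_simplex3 : MeasurableSet simplex3 :=
  simplex3_eq_cornerSimplex ▸ measurableSet_cornerSimplex 3 1

theorem integrableOn_lamMonomial_mul_dirichlet3 {γ : ℝ} (hγ : 0 < γ) (k : Fin 4 → ℕ) :
    IntegrableOn (fun x => lamMonomial k x * dirichlet3 γ x) simplex3 := by
  have h := (integrableOn_dirichletMonomial (α := fun i : Fin 3 => γ + k i.castSucc)
    (fun i => by positivity) (by positivity : 0 < γ + k 3) one_pos).const_mul
      (Gamma (4 * γ) / Gamma γ ^ 4)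
  rw [← simplex3_eq_cornerSimplex] at h
  exact IntegrableOn.congr_fun h (fun x hx => (lamMonomial_mul_dirichlet3 hγ k hx).symm)
    measurableSet_simplex3

def dirichletMoment (γ : ℝ) (k : Fin 4 → ℕ) : ℝ :=
  (∏ i, (ascPochhammer ℝ (k i)).eval γ) / (ascPochhammer ℝ (∑ i, k i)).eval (4 * γ)

theorem integral_lamMonomial_mul_dirichlet3 {γ : ℝ} (hγ : 0 < γ) (k : Fin 4 → ℕ) :
    ∫ x in simplex3, lamMonomial k x * dirichlet3 γ x = dirichletMoment γ k := by
  rw [dirichletMoment, setIntegral_congr_fun measurableSet_simplex3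
      fun x hx => lamMonomial_mul_dirichlet3 hγ k hx, integral_const_mul,
    simplex3_eq_cornerSimplex, integral_dirichletMonomial (fun i => by positivity)
      (by positivity) one_pos, one_rpow, one_mul, dirichletConst_castSucc_last,
    Real.Gamma_add_nat (by positivity : 0 < 4 * γ)]
  simp_rw [Real.Gamma_add_nat hγ, Finset.prod_mul_distrib, Finset.prod_const, Finset.card_univ,
    Fintype.card_fin]
  have := (Gamma_pos_of_pos hγ).ne'
  have := (Gamma_pos_of_pos (by positivity : 0 < 4 * γ)).ne'
  field_simp

theorem psi12_mul_lamMonomial (γ : ℝ) (k : Fin 4 → ℕ) (x : Fin 3 → ℝ) :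
    psi12 γ x * lamMonomial k x =
      lamMonomial (k + ![1, 1, 0, 0]) x + γ ^ 2 / (2 * (2 * γ + 1) * (4 * γ + 1)) * lamMonomial k x -
        γ / (2 * (2 * γ + 1)) * (lamMonomial (k + ![1, 0, 0, 0]) x +
          lamMonomial (k + ![0, 1, 0, 0]) x) := by
  simp only [psi12, lamMonomial, Fin.prod_univ_four, Pi.add_apply, pow_add, Matrix.cons_val_zero,
    Matrix.cons_val_one, Matrix.cons_val, pow_one, pow_zero, mul_one]
  ring

theorem integral_psi12_mul_lamMonomial_mul_dirichlet3 {γ : ℝ} (hγ : 0 < γ) (k : Fin 4 → ℕ) :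
    ∫ x in simplex3, psi12 γ x * lamMonomial k x * dirichlet3 γ x =
      dirichletMoment γ (k + ![1, 1, 0, 0]) +
        γ ^ 2 / (2 * (2 * γ + 1) * (4 * γ + 1)) * dirichletMoment γ k -
        γ / (2 * (2 * γ + 1)) *
          (dirichletMoment γ (k + ![1, 0, 0, 0]) + dirichletMoment γ (k + ![0, 1, 0, 0])) := by
  have hint := integrableOn_lamMonomial_mul_dirichlet3 hγ
  have hpt : ∀ x, psi12 γ x * lamMonomial k x * dirichlet3 γ x =
      lamMonomial (k + ![1, 1, 0, 0]) x * dirichlet3 γ x +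
        γ ^ 2 / (2 * (2 * γ + 1) * (4 * γ + 1)) * (lamMonomial k x * dirichlet3 γ x) -
        γ / (2 * (2 * γ + 1)) * (lamMonomial (k + ![1, 0, 0, 0]) x * dirichlet3 γ x +
          lamMonomial (k + ![0, 1, 0, 0]) x * dirichlet3 γ x) := fun x => by
    rw [psi12_mul_lamMonomial]; ring
  simp only [hpt]
  rw [integral_sub, integral_add, integral_const_mul, integral_const_mul, integral_add]
  · simp only [integral_lamMonomial_mul_dirichlet3 hγ]
  exacts [hint _, hint _, hint _, (hint k).const_mul _, (hint _).add ((hint k).const_mul _),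
    ((hint _).add (hint _)).const_mul _]

/-- The diagonal, anti-diagonal, and off-diagonal moments `s_γ, z_γ, t_γ` of `ψ₁₂` against
the quadratic products `λ₁λ₂, λ₃λ₄, λ₁λ₃` with respect to the Dirichlet density `Ω^{(γ)}`. -/
theorem psi12_moments (γ : ℝ) (hγ : 0 < γ) :
    (∫ x in simplex3, psi12 γ x * (lam 0 x * lam 1 x) * dirichlet3 γ x =
        γ * (5 * γ ^ 2 + 5 * γ + 1) /
          (8 * (1 + 2 * γ) ^ 2 * (1 + 4 * γ) ^ 2 * (3 + 4 * γ))) ∧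
      (∫ x in simplex3, psi12 γ x * (lam 2 x * lam 3 x) * dirichlet3 γ x =
        γ ^ 3 / (8 * (1 + 2 * γ) ^ 2 * (1 + 4 * γ) ^ 2 * (3 + 4 * γ))) ∧
      (∫ x in simplex3, psi12 γ x * (lam 0 x * lam 2 x) * dirichlet3 γ x =
        -(γ ^ 2) / (16 * (1 + 2 * γ) * (1 + 4 * γ) ^ 2 * (3 + 4 * γ))) := by
  have h12 : ∀ x, lam 0 x * lam 1 x = lamMonomial ![1, 1, 0, 0] x := by
    simp [lamMonomial, Fin.prod_univ_four]
  have h34 : ∀ x, lam 2 x * lam 3 x = lamMonomial ![0, 0, 1, 1] x := by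
    simp [lamMonomial, Fin.prod_univ_four]
  have h13 : ∀ x, lam 0 x * lam 2 x = lamMonomial ![1, 0, 1, 0] x := by
    simp [lamMonomial, Fin.prod_univ_four]
  simp only [h12, h34, h13, integral_psi12_mul_lamMonomial_mul_dirichlet3 hγ]
  simp only [dirichletMoment, Pi.add_apply, Fin.prod_univ_four, Fin.sum_univ_four,
    Matrix.cons_val_zero, Matrix.cons_val_one, Matrix.cons_val, ascPochhammer_succ_eval,
    ascPochhammer_one, ascPochhammer_zero, Polynomial.eval_X, Polynomial.eval_one, Nat.cast_one,
    add_zero, zero_add, mul_one, one_mul]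
  refine ⟨?_, ?_, ?_⟩ <;> field_simp <;> ring

end
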